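/- arXiv:1903.03535 — 3 statements merged into one kernel-verified Lean document; each statement's English description precedes it below -/
import Mathlib

section
/- Let B ⊆ Z/nZ. Then g_B has coefficients in F_{q^r} and is Galois coprime if and only if B is a union of H-orbits, no two of which lie in the same G-orbit, and r divides the multiplicative order of q modulo m_k for every k ∈ B, where m_k = n/gcd(n, k). -/
/-!
The `i`-th power of the Frobenius sends the root `ζ ^ k` of `g_B` to `ζ ^ (q ^ i * k)`, so it
maps `g_B` to `g_{q^i B}`. Hence the coefficients of `g_B` lie in `F_{q^r}` iff `q ^ r • B = B`,
and `g_B` is coprime to its `i`-th conjugate iff `B` and `q ^ i • B` are disjoint. What remains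
is combinatorics of the cyclic action of `q` on `B`: for `B` stable under `q ^ r`, the sets
`q ^ i • B`, `0 < i < r`, all miss `B` iff `q ^ t • k ∈ B` forces `r ∣ t` for `k ∈ B`, which
amounts to the orbit condition together with `r` dividing the period of each `k ∈ B`. Since the
additive order of `k` in `ℤ/nℤ` is `m_k = n / gcd(n, k)`, that period is the order of `q`
modulo `m_k`.
-/

open Polynomial

/-- Coefficientwise application of `x ↦ x^(q^i)` (the `i`-th power of the Frobenius
`σ : x ↦ x^q`) to a polynomial. -/
noncomputable def polyGal {L : Type*} [Field L] (q i : ℕ) (g : Polynomial L) : Polynomial L :=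
  ∑ j ∈ g.support, Polynomial.C ((g.coeff j) ^ (q ^ i)) * Polynomial.X ^ j

/-- `g_B(x) = ∏_{k ∈ B} (x − ζ^k)` for a subset `B ⊆ ℤ/nℤ`. -/
noncomputable def gB {L : Type*} [Field L] {n : ℕ} [NeZero n] (ζ : L) (B : Finset (ZMod n)) :
    Polynomial L :=
  ∏ k ∈ B, (Polynomial.X - Polynomial.C (ζ ^ (ZMod.val k)))

open scoped Pointwise

section GroupAction

variable {G α : Type*} [Group G] [MulAction G α] {g : G} {r : ℕ} {B : Set α}

lemma pow_mul_smul_mem (hB : ∀ k ∈ B, g ^ r • k ∈ B) (s : ℕ) {k : α} (hk : k ∈ B) :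
    g ^ (r * s) • k ∈ B := by
  induction s with
  | zero => simpa using hk
  | succ s ih => rw [Nat.mul_succ, add_comm, pow_add, mul_smul]; exact hB _ ih

lemma dvd_of_pow_smul_mem (hr : 0 < r) (hB : ∀ k ∈ B, g ^ r • k ∈ B)
    (hgap : ∀ i, 0 < i → i < r → ∀ k ∈ B, g ^ i • k ∉ B) {k : α} (hk : k ∈ B) {t : ℕ}
    (ht : g ^ t • k ∈ B) : r ∣ t := by
  refine Nat.dvd_of_mod_eq_zero (Nat.eq_zero_of_not_pos fun hpos => ?_)
  refine hgap _ hpos (Nat.mod_lt t hr) _ (pow_mul_smul_mem hB (t / r) hk) ?_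
  rwa [smul_smul, ← pow_add, Nat.mod_add_div]

lemma forall_pow_smul_notMem_iff (hr : 0 < r) (hB : ∀ k ∈ B, g ^ r • k ∈ B) :
    (∀ i, 0 < i → i < r → ∀ k ∈ B, g ^ i • k ∉ B) ↔
      (∀ k ∈ B, ∀ k' ∈ B, (∃ t : ℕ, k' = g ^ t • k) → ∃ t : ℕ, k' = (g ^ r) ^ t • k) ∧
        ∀ k ∈ B, r ∣ MulAction.period g k := by
  constructor
  · intro hgap
    refine ⟨?_, fun k hk => dvd_of_pow_smul_mem hr hB hgap hk ?_⟩
    · rintro k hk _ hk' ⟨t, rfl⟩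
      obtain ⟨s, rfl⟩ := dvd_of_pow_smul_mem hr hB hgap hk hk'
      exact ⟨s, by rw [pow_mul]⟩
    · rwa [MulAction.pow_period_smul]
  · rintro ⟨horbit, hperiod⟩ i hi hir k hk hik
    obtain ⟨s, hs⟩ := horbit k hk _ hik ⟨i, rfl⟩
    have hfix : g ^ (-((r * s : ℕ) : ℤ) + i) • k = k := by
      rw [zpow_add, mul_smul, zpow_natCast, hs, ← pow_mul, zpow_neg, zpow_natCast, inv_smul_smul]
    have hdvd : (r : ℤ) ∣ i := by
      have := (Int.natCast_dvd_natCast.mpr (hperiod k hk)).trans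
        (MulAction.zpow_smul_eq_iff_period_dvd.mp hfix)
      exact (dvd_add_right (dvd_neg.mpr (dvd_mul_right (r : ℤ) s))).mp (by simpa using this)
    exact absurd (Nat.le_of_dvd hi (Int.natCast_dvd_natCast.mp hdvd)) (by omega)

end GroupAction

lemma ZMod.natCast_mul_eq_self_iff {n : ℕ} [NeZero n] (c : ℕ) (k : ZMod n) :
    (c : ZMod n) * k = k ↔ (c : ZMod (n / n.gcd k.val)) = 1 := by
  have hk : addOrderOf k = n / n.gcd k.val := by
    conv_lhs => rw [← ZMod.natCast_zmod_val k]
    exact ZMod.addOrderOf_coe _ (NeZero.ne n)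
  calc (c : ZMod n) * k = k ↔ ((c : ℤ) - 1) • k = 0 := by
        rw [sub_smul, one_smul, natCast_zsmul, nsmul_eq_mul, sub_eq_zero]
    _ ↔ ((n / n.gcd k.val : ℕ) : ℤ) ∣ c - 1 := by rw [← hk, addOrderOf_dvd_iff_zsmul_eq_zero]
    _ ↔ _ := by rw [← ZMod.intCast_eq_intCast_iff_dvd_sub, Int.cast_one, Int.cast_natCast, eq_comm]

lemma ZMod.period_units_eq_orderOf {n : ℕ} [NeZero n] {c : ℕ} (u : (ZMod n)ˣ)
    (hu : (u : ZMod n) = c) (k : ZMod n) :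
    MulAction.period u k = orderOf (c : ZMod (n / n.gcd k.val)) := by
  refine Nat.dvd_right_iff_eq.mp fun t => ?_
  rw [← MulAction.pow_smul_eq_iff_period_dvd, Units.smul_def, smul_eq_mul,
    Units.val_pow_eq_pow_val, hu, ← Nat.cast_pow, ZMod.natCast_mul_eq_self_iff, Nat.cast_pow,
    orderOf_dvd_iff_pow_eq_one]

section Finset

variable {G α : Type*} [Group G] [MulAction G α] [DecidableEq α] {g : G} {s : Finset α}

lemma Finset.smul_finset_eq_self_iff : g • s = s ↔ ∀ x ∈ s, g • x ∈ s := by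
  rw [← Finset.image_subset_iff, ← Finset.smul_finset_def]
  exact ⟨Eq.subset, fun h => Finset.eq_of_subset_of_card_le h (Finset.card_smul_finset g s).ge⟩

lemma Finset.disjoint_smul_finset_self_iff : Disjoint s (g • s) ↔ ∀ x ∈ s, g • x ∉ s := by
  rw [Finset.disjoint_right, Finset.smul_finset_def, Finset.forall_mem_image]

end Finset

section Polynomials

variable {L : Type*} [Field L]

lemma polyGal_eq_map_iterateFrobenius (p : ℕ) [ExpChar L p] (e i : ℕ) (g : L[X]) :
    polyGal (p ^ e) i g = g.map (iterateFrobenius L p (e * i)) := by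
  conv_rhs => rw [g.as_sum_support_C_mul_X_pow]
  simp only [polyGal, Polynomial.map_sum, Polynomial.map_mul, Polynomial.map_C,
    Polynomial.map_pow, Polynomial.map_X, iterateFrobenius_def, pow_mul]

lemma polyGal_eq_self_iff (p : ℕ) [ExpChar L p] (e i : ℕ) (g : L[X]) :
    polyGal (p ^ e) i g = g ↔ ∀ j, (g.coeff j) ^ ((p ^ e) ^ i) = g.coeff j := by
  simp only [polyGal_eq_map_iterateFrobenius, Polynomial.ext_iff, coeff_map,
    iterateFrobenius_def, pow_mul]

lemma isCoprime_prod_X_sub_C_iff [DecidableEq L] {s t : Finset L} :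
    IsCoprime (∏ a ∈ s, (X - C a)) (∏ a ∈ t, (X - C a)) ↔ Disjoint s t := by
  refine ⟨fun h => Finset.disjoint_left.mpr fun a has hat => not_isUnit_X_sub_C a
    (h.isUnit_of_dvd' (Finset.dvd_prod_of_mem _ has) (Finset.dvd_prod_of_mem _ hat)), fun h => ?_⟩
  refine IsCoprime.prod_left fun a ha => IsCoprime.prod_right fun b hb => ?_
  exact isCoprime_X_sub_C_of_isUnit_sub (sub_ne_zero_of_ne
    fun hab => Finset.disjoint_left.mp h ha (by rwa [hab])).isUnit

variable {n : ℕ} [NeZero n] {ζ : L}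

lemma IsPrimitiveRoot.pow_val_injective (hζ : IsPrimitiveRoot ζ n) :
    Function.Injective fun k : ZMod n => ζ ^ k.val :=
  fun k k' h => ZMod.val_injective n (hζ.pow_inj (ZMod.val_lt k) (ZMod.val_lt k') h)

lemma IsPrimitiveRoot.pow_val_pow (hζ : IsPrimitiveRoot ζ n) (k : ZMod n) (c : ℕ) :
    (ζ ^ k.val) ^ c = ζ ^ ((c : ZMod n) * k).val := by
  rw [← pow_mul, (hζ.isOfFinOrder (NeZero.ne n)).pow_eq_pow_iff_modEq, ← hζ.eq_orderOf,
    ← ZMod.natCast_eq_natCast_iff, Nat.cast_mul, ZMod.natCast_zmod_val, ZMod.natCast_zmod_val,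
    mul_comm]

lemma gB_eq_prod_image [DecidableEq L] (hζ : IsPrimitiveRoot ζ n) (B : Finset (ZMod n)) :
    gB ζ B = ∏ a ∈ B.image fun k : ZMod n => ζ ^ k.val, (X - C a) := by
  rw [gB, Finset.prod_image fun _ _ _ _ h => hζ.pow_val_injective h]

lemma gB_injective (hζ : IsPrimitiveRoot ζ n) :
    Function.Injective (gB ζ : Finset (ZMod n) → L[X]) := by
  classical
  intro B B' h
  have hroots := congrArg roots h
  rw [gB_eq_prod_image hζ, gB_eq_prod_image hζ, roots_prod_X_sub_C, roots_prod_X_sub_C] at hroots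
  exact Finset.image_injective hζ.pow_val_injective (Finset.val_injective hroots)

lemma isCoprime_gB_iff (hζ : IsPrimitiveRoot ζ n) {B B' : Finset (ZMod n)} :
    IsCoprime (gB ζ B) (gB ζ B') ↔ Disjoint B B' := by
  classical
  rw [gB_eq_prod_image hζ, gB_eq_prod_image hζ, isCoprime_prod_X_sub_C_iff,
    Finset.disjoint_image hζ.pow_val_injective]

lemma map_gB (hζ : IsPrimitiveRoot ζ n) {φ : L →+* L} {c : ℕ} (hφ : ∀ x, φ x = x ^ c)
    {u : (ZMod n)ˣ} (hu : (u : ZMod n) = c) (B : Finset (ZMod n)) :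
    (gB ζ B).map φ = gB ζ (u • B) := by
  classical
  rw [gB, Polynomial.map_prod, gB, Finset.smul_finset_def,
    Finset.prod_image fun _ _ _ _ h => MulAction.injective u h]
  refine Finset.prod_congr rfl fun k _ => ?_
  rw [Polynomial.map_sub, Polynomial.map_X, Polynomial.map_C, hφ, hζ.pow_val_pow]
  simp only [Units.smul_def, hu, smul_eq_mul]

end Polynomials

theorem stmt10_general (p e q r n : ℕ) (hp : p.Prime) (hq : q = p ^ e)
    (hr : 1 < r) [NeZero n] (hcop : Nat.Coprime n q)
    (L : Type*) [Field L] [CharP L p]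
    (ζ : L) (hζ : IsPrimitiveRoot ζ n)
    (B : Finset (ZMod n)) :
    ((∀ j : ℕ, ((gB ζ B).coeff j) ^ (q ^ r) = (gB ζ B).coeff j) ∧
      (∀ i : ℕ, 0 < i → i < r → IsCoprime (gB ζ B) (polyGal q i (gB ζ B)))) ↔
    ((∀ k ∈ B, ((q : ZMod n)) ^ r * k ∈ B) ∧
      (∀ k ∈ B, ∀ k' ∈ B, (∃ t : ℕ, k' = (q : ZMod n) ^ t * k) →
        ∃ t : ℕ, k' = ((q : ZMod n) ^ r) ^ t * k) ∧
      (∀ k ∈ B, r ∣ orderOf ((q : ZMod (n / Nat.gcd n (ZMod.val k)))))) := by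
  subst hq
  have : Fact p.Prime := ⟨hp⟩
  set u := ZMod.unitOfCoprime (p ^ e) hcop.symm
  have hu : (u : ZMod n) = (p ^ e : ℕ) := ZMod.coe_unitOfCoprime _ _
  have hpolyGal (i : ℕ) : polyGal (p ^ e) i (gB ζ B) = gB ζ (u ^ i • B) := by
    rw [polyGal_eq_map_iterateFrobenius]
    exact map_gB hζ (fun x => by rw [iterateFrobenius_def, pow_mul])
      (by simp [hu]) B
  have hfixed : (∀ j, ((gB ζ B).coeff j) ^ ((p ^ e) ^ r) = (gB ζ B).coeff j) ↔
      ∀ k ∈ B, u ^ r • k ∈ B := by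
    rw [← polyGal_eq_self_iff, hpolyGal, (gB_injective hζ).eq_iff, Finset.smul_finset_eq_self_iff]
  have hcoprime (i : ℕ) : IsCoprime (gB ζ B) (polyGal (p ^ e) i (gB ζ B)) ↔
      ∀ k ∈ B, u ^ i • k ∉ B := by
    rw [hpolyGal, isCoprime_gB_iff hζ, Finset.disjoint_smul_finset_self_iff]
  simp only [hfixed, hcoprime]
  refine and_congr_right fun hB => ?_
  simpa only [Units.smul_def, smul_eq_mul, Units.val_pow_eq_pow_val, hu, Finset.mem_coe,
    ZMod.period_units_eq_orderOf u hu] using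
    forall_pow_smul_notMem_iff (B := (B : Set (ZMod n))) (by omega) hB

/-- `g_B` has coefficients in `F_{q^r}` and is Galois coprime iff `B` is a
union of `H`-orbits (`H = ⟨q^r⟩ ≤ (ℤ/nℤ)ˣ`), no two of which lie in the same `G`-orbit
(`G = ⟨q⟩`), and `r ∣ ord(q mod m_k)` for every `k ∈ B`, where `m_k = n/gcd(n,k)`.
Here `ζ` is a primitive `n`-th root of unity in the splitting field `L` of `x^n − 1`
over `F_{q^r}`; membership of a coefficient `c` in `F_{q^r}` reads `c^(q^r) = c`, and the
non-trivial elements of `Gal(F_{q^r}/F_q)` act as `x ↦ x^(q^i)`, `1 ≤ i < r`. -/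
theorem stmt10 (p e q r n : ℕ) (hp : p.Prime) (he : 0 < e) (hq : q = p ^ e)
    (hr : 1 < r) [NeZero n] (hcop : Nat.Coprime n q)
    (L : Type*) [Field L] [Fintype L] [CharP L p]
    (ζ : L) (hζ : IsPrimitiveRoot ζ n)
    (B : Finset (ZMod n)) :
    ((∀ j : ℕ, ((gB ζ B).coeff j) ^ (q ^ r) = (gB ζ B).coeff j) ∧
      (∀ i : ℕ, 0 < i → i < r → IsCoprime (gB ζ B) (polyGal q i (gB ζ B)))) ↔
    ((∀ k ∈ B, ((q : ZMod n)) ^ r * k ∈ B) ∧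
      (∀ k ∈ B, ∀ k' ∈ B, (∃ t : ℕ, k' = (q : ZMod n) ^ t * k) →
        ∃ t : ℕ, k' = ((q : ZMod n) ^ r) ^ t * k) ∧
      (∀ k ∈ B, r ∣ orderOf ((q : ZMod (n / Nat.gcd n (ZMod.val k)))))) :=
  stmt10_general p e q r n hp hq hr hcop L ζ hζ B
end

section
/- Suppose r divides the multiplicative order of q modulo n, and let B ≤ (Z/nZ)^× be a subgroup such that B ∩ G = H, where G = ⟨q⟩ and H = ⟨q^r⟩ in (Z/nZ)^×. Then g_B ∈ F_{q^r}[x] is Galois coprime; in particular, when r = 2, n is an odd prime and q is a quadratic non-residue modulo n, taking B to be the group of quadratic residues modulo n shows that the quadratic-residue code over F_{q^2} of length n is Galois supplemented. -/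
/-!
Since `x ↦ x^(q^i)` sends `ζ^k` to `ζ^(k q^i)`, it maps `g_B` to `g_{B q^i}`. For `u = q mod n`,
the conditions `B ∩ ⟨u⟩ = ⟨u^r⟩` and `r ∣ ord u` say that `u^i ∈ B` exactly when `r ∣ i`. Hence
the coset `B u^r` is `B`, so `g_B` has coefficients in `F_{q^r}`, while for `0 < i < r` the coset
`B u^i` is disjoint from `B`, so `g_B` and its conjugate have no common root. The quadratic
residues form such a `B` for `r = 2` because `q` is not a square.
-/

open Polynomial

/-- `g` lies in `F_{q^r}[x]` (its coefficients are fixed by `x ↦ x^(q^r)`) and is coprime to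
each of its conjugates under `x ↦ x^(q^i)`, `0 < i < r`. -/
def IsGaloisCoprime {L : Type*} [Field L] (q r : ℕ) (g : L[X]) : Prop :=
  (∀ j : ℕ, (g.coeff j) ^ (q ^ r) = g.coeff j) ∧
    ∀ i : ℕ, 0 < i → i < r → IsCoprime g (polyGal q i g)

section Units

variable {M : Type*} [Monoid M] [DecidableEq M] {B : Subgroup Mˣ} {Bs : Finset M}

lemma image_mul_eq_of_mem (hBs : ∀ k, k ∈ Bs ↔ ∃ u ∈ B, (u : M) = k) {v : Mˣ} (hv : v ∈ B) :
    Bs.image (· * (v : M)) = Bs := by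
  refine Finset.eq_of_subset_of_card_le (fun k hk => ?_) ?_
  · obtain ⟨a, ha, rfl⟩ := Finset.mem_image.mp hk
    obtain ⟨b, hb, rfl⟩ := (hBs a).mp ha
    exact (hBs _).mpr ⟨b * v, B.mul_mem hb hv, Units.val_mul b v⟩
  · rw [Finset.card_image_of_injective _ v.isUnit.mul_left_injective]

lemma disjoint_image_mul_of_notMem (hBs : ∀ k, k ∈ Bs ↔ ∃ u ∈ B, (u : M) = k) {v : Mˣ}
    (hv : v ∉ B) : Disjoint Bs (Bs.image (· * (v : M))) := by
  refine Finset.disjoint_left.mpr fun k hk hk' => hv ?_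
  obtain ⟨a, ha, hak⟩ := Finset.mem_image.mp hk'
  obtain ⟨b₁, hb₁, rfl⟩ := (hBs k).mp hk
  obtain ⟨b₂, hb₂, rfl⟩ := (hBs a).mp ha
  have hb : b₁ = b₂ * v := Units.ext (by rw [Units.val_mul, hak])
  simpa [hb] using B.mul_mem (B.inv_mem hb₂) hb₁

end Units

lemma pow_notMem_of_inf_zpowers_eq {G : Type*} [Group G] {B : Subgroup G} {u : G} {r : ℕ}
    (hord : r ∣ orderOf u) (hBG : B ⊓ Subgroup.zpowers u = Subgroup.zpowers (u ^ r))
    {i : ℕ} (hi : 0 < i) (hir : i < r) : u ^ i ∉ B := by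
  intro hmem
  have hmem' : u ^ i ∈ Subgroup.zpowers (u ^ r) := hBG ▸ ⟨hmem, i, zpow_natCast u i⟩
  obtain ⟨m, hm⟩ := Subgroup.mem_zpowers_iff.mp hmem'
  rw [← zpow_natCast, ← zpow_natCast, ← zpow_mul, zpow_eq_zpow_iff_modEq] at hm
  have hdvd : (r : ℤ) ∣ i := by
    have := (hm.of_dvd (Int.natCast_dvd_natCast.mpr hord)).dvd
    simpa using dvd_add this (dvd_mul_right (r : ℤ) m)
  exact absurd (Nat.le_of_dvd hi (Int.natCast_dvd_natCast.mp hdvd)) (by omega)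

lemma ne_zero_and_isSquare_iff {K : Type*} [Field K] (k : K) :
    (k ≠ 0 ∧ IsSquare k) ↔ ∃ v ∈ Subgroup.square Kˣ, (v : K) = k := by
  constructor
  · rintro ⟨hk, c, rfl⟩
    have hc : c ≠ 0 := by rintro rfl; simp at hk
    exact ⟨Units.mk0 c hc * Units.mk0 c hc, ⟨_, rfl⟩, by simp⟩
  · rintro ⟨v, ⟨w, rfl⟩, rfl⟩
    exact ⟨Units.ne_zero _, w, Units.val_mul w w⟩

lemma IsPrimitiveRoot.pow_val_mul_natCast {M : Type*} [CommMonoid M] {ζ : M} {n : ℕ}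
    (hζ : IsPrimitiveRoot ζ n) (k : ZMod n) (m : ℕ) : ζ ^ (k * m).val = (ζ ^ k.val) ^ m := by
  rw [← pow_mul, ZMod.val_mul, ZMod.val_natCast]
  exact pow_eq_pow_of_modEq ((Nat.mod_modEq _ n).trans ((Nat.mod_modEq m n).mul_left _))
    hζ.pow_eq_one

section

variable {L : Type*} [Field L] {n : ℕ} [NeZero n] {ζ : L}

lemma polyGal_eq_map (q i : ℕ) {φ : L →+* L} (hφ : ∀ x, φ x = x ^ q ^ i) (g : L[X]) :
    polyGal q i g = g.map φ := by
  conv_rhs => rw [g.as_sum_support_C_mul_X_pow]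
  simp only [polyGal, Polynomial.map_sum, Polynomial.map_mul, Polynomial.map_pow, map_C, map_X,
    hφ]

lemma gB_map_pow (hζ : IsPrimitiveRoot ζ n) (Bs : Finset (ZMod n)) {m : ℕ} {v : (ZMod n)ˣ}
    (hm : (m : ZMod n) = v) {φ : L →+* L} (hφ : ∀ x, φ x = x ^ m) :
    (gB ζ Bs).map φ = gB ζ (Bs.image (· * (v : ZMod n))) := by
  rw [gB, gB, Polynomial.map_prod,
    Finset.prod_image fun _ _ _ _ h => v.isUnit.mul_left_injective h]
  refine Finset.prod_congr rfl fun k _ => ?_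
  rw [Polynomial.map_sub, map_X, map_C, hφ, ← hm, hζ.pow_val_mul_natCast]

lemma gB_isCoprime_of_disjoint (hζ : IsPrimitiveRoot ζ n) {A A' : Finset (ZMod n)}
    (h : Disjoint A A') : IsCoprime (gB ζ A) (gB ζ A') := by
  refine IsCoprime.prod_left fun k hk => IsCoprime.prod_right fun k' hk' => ?_
  refine isCoprime_X_sub_C_of_isUnit_sub (sub_ne_zero.mpr fun hkk' => ?_).isUnit
  have : k = k' := ZMod.val_injective n (hζ.pow_inj k.val_lt k'.val_lt hkk')
  exact Finset.disjoint_left.mp h hk (this ▸ hk')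

end

theorem isGaloisCoprime_gB {p e q r n : ℕ} (hp : p.Prime) (hq : q = p ^ e) [NeZero n]
    {L : Type*} [Field L] [CharP L p] {ζ : L} (hζ : IsPrimitiveRoot ζ n)
    {B : Subgroup (ZMod n)ˣ} {Bs : Finset (ZMod n)}
    (hBs : ∀ k : ZMod n, k ∈ Bs ↔ ∃ u ∈ B, (u : ZMod n) = k)
    {u : (ZMod n)ˣ} (hu : (u : ZMod n) = q) (hur : u ^ r ∈ B)
    (hui : ∀ i : ℕ, 0 < i → i < r → u ^ i ∉ B) :
    IsGaloisCoprime q r (gB ζ Bs) := by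
  have : ExpChar L p := ExpChar.prime hp
  have hcast (i : ℕ) : ((q ^ i : ℕ) : ZMod n) = ↑(u ^ i) := by push_cast; rw [hu]
  have hfrob (i : ℕ) (x : L) : iterateFrobenius L p (e * i) x = x ^ q ^ i := by
    rw [iterateFrobenius_def, hq, pow_mul]
  constructor
  · intro j
    have h := gB_map_pow hζ Bs (hcast r) (hfrob r)
    rw [image_mul_eq_of_mem hBs hur] at h
    simpa [Polynomial.coeff_map, hfrob] using congrArg (coeff · j) h
  · intro i hi hir
    rw [polyGal_eq_map q i (hfrob i), gB_map_pow hζ Bs (hcast i) (hfrob i)]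
    exact gB_isCoprime_of_disjoint hζ (disjoint_image_mul_of_notMem hBs (hui i hi hir))

theorem stmt12_general (p e q r n : ℕ) (hp : p.Prime) (hq : q = p ^ e)
    [NeZero n] (hcop : Nat.Coprime q n)
    (L : Type*) [Field L] [CharP L p]
    (ζ : L) (hζ : IsPrimitiveRoot ζ n)
    (hord : r ∣ orderOf ((q : ZMod n)))
    (B : Subgroup (ZMod n)ˣ)
    (hBG : B ⊓ Subgroup.zpowers (ZMod.unitOfCoprime q hcop) =
      Subgroup.zpowers ((ZMod.unitOfCoprime q hcop) ^ r))
    (Bs : Finset (ZMod n)) (hBs : ∀ k : ZMod n, k ∈ Bs ↔ ∃ u ∈ B, (u : ZMod n) = k) :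
    ((∀ j : ℕ, ((gB ζ Bs).coeff j) ^ (q ^ r) = (gB ζ Bs).coeff j) ∧
      (∀ i : ℕ, 0 < i → i < r → IsCoprime (gB ζ Bs) (polyGal q i (gB ζ Bs)))) ∧
    (∀ QR : Finset (ZMod n), r = 2 → n.Prime → Odd n → ¬ IsSquare ((q : ZMod n)) →
      (∀ k : ZMod n, k ∈ QR ↔ k ≠ 0 ∧ IsSquare k) →
      ((∀ j : ℕ, ((gB ζ QR).coeff j) ^ (q ^ r) = (gB ζ QR).coeff j) ∧
        (∀ i : ℕ, 0 < i → i < r → IsCoprime (gB ζ QR) (polyGal q i (gB ζ QR))))) := by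
  set u := ZMod.unitOfCoprime q hcop
  have hu : (u : ZMod n) = q := ZMod.coe_unitOfCoprime q hcop
  have hordu : r ∣ orderOf u := by rwa [← orderOf_units, hu]
  have hur : u ^ r ∈ B := (hBG ▸ Subgroup.mem_zpowers (u ^ r) : u ^ r ∈ B ⊓ _).1
  refine ⟨isGaloisCoprime_gB hp hq hζ hBs hu hur
    fun i hi hir => pow_notMem_of_inf_zpowers_eq hordu hBG hi hir, ?_⟩
  rintro QR rfl hn - hq_nonsq hQR
  have := Fact.mk hn
  refine isGaloisCoprime_gB hp hq hζ (B := Subgroup.square (ZMod n)ˣ)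
    (fun k => (hQR k).trans (ne_zero_and_isSquare_iff k)) hu ⟨u, sq u⟩ ?_
  intro i hi hi2 hsq
  obtain rfl : i = 1 := by omega
  exact hq_nonsq (hu ▸ (pow_one u ▸ hsq).map (Units.coeHom (ZMod n)))

/-- if `r ∣ ord(q mod n)` and `B ≤ (ℤ/nℤ)ˣ` is a subgroup with `B ∩ G = H`,
where `G = ⟨q⟩` and `H = ⟨q^r⟩`, then `g_B ∈ F_{q^r}[x]` is Galois coprime; in particular
(when `r = 2`, `n` an odd prime and `q` a quadratic non-residue mod `n`) taking `B` to be
the group of quadratic residues mod `n` shows the quadratic-residue code over `F_{q^2}` of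
length `n` is Galois supplemented.  Here `ζ` is a primitive `n`-th root of unity in the
splitting field `L` of `x^n − 1` over `F_{q^r}`, membership of a coefficient `c` in
`F_{q^r}` reads `c^(q^r) = c`, and the non-trivial elements of `Gal(F_{q^r}/F_q)` act as
`x ↦ x^(q^i)`, `1 ≤ i < r`. -/
theorem stmt12 (p e q r n : ℕ) (hp : p.Prime) (he : 0 < e) (hq : q = p ^ e)
    (hr : 1 < r) [NeZero n] (hcop : Nat.Coprime q n)
    (L : Type*) [Field L] [Fintype L] [CharP L p]
    (ζ : L) (hζ : IsPrimitiveRoot ζ n)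
    (hord : r ∣ orderOf ((q : ZMod n)))
    (B : Subgroup (ZMod n)ˣ)
    (hBG : B ⊓ Subgroup.zpowers (ZMod.unitOfCoprime q hcop) =
      Subgroup.zpowers ((ZMod.unitOfCoprime q hcop) ^ r))
    (Bs : Finset (ZMod n)) (hBs : ∀ k : ZMod n, k ∈ Bs ↔ ∃ u ∈ B, (u : ZMod n) = k) :
    ((∀ j : ℕ, ((gB ζ Bs).coeff j) ^ (q ^ r) = (gB ζ Bs).coeff j) ∧
      (∀ i : ℕ, 0 < i → i < r → IsCoprime (gB ζ Bs) (polyGal q i (gB ζ Bs)))) ∧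
    (∀ QR : Finset (ZMod n), r = 2 → n.Prime → Odd n → ¬ IsSquare ((q : ZMod n)) →
      (∀ k : ZMod n, k ∈ QR ↔ k ≠ 0 ∧ IsSquare k) →
      ((∀ j : ℕ, ((gB ζ QR).coeff j) ^ (q ^ r) = (gB ζ QR).coeff j) ∧
        (∀ i : ℕ, 0 < i → i < r → IsCoprime (gB ζ QR) (polyGal q i (gB ζ QR))))) :=
  stmt12_general p e q r n hp hq hcop L ζ hζ hord B hBG Bs hBs
end

section
/- Let n be odd, λ ∈ F_4 ∖ F_2, ζ a primitive n-th root of unity in the splitting field of x^n − 1 over F_4, and B ⊆ Z/nZ a complete 2²-block, i.e., g_B ∈ F_4[x] is Galois coprime and the disjoint union B ⊔ 2B equals Z/nZ ∖ {0}. Define B* = {1 ≤ j ≤ n−1 : Σ_{i ∈ B} ζ^{−ij} = λ}. Then B* is also a complete 2²-block, and B** = −B if n ≡ 1 (mod 4), while B** = −2B if n ≡ 3 (mod 4). -/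
open Polynomial

/-- `B ⊆ ℤ/nℤ` is a complete `2²`-block: `g_B` has coefficients in `F_4` (the roots of
`x^4 = x`), `g_B` is Galois coprime (coprime to `g_B^σ`, the coefficientwise square), and
`B ⊔ 2B = ℤ/nℤ ∖ {0}` (a disjoint union). -/
def IsComplete2Block {L : Type*} [Field L] {n : ℕ} [NeZero n] (ζ : L)
    (B : Finset (ZMod n)) : Prop :=
  (∀ j : ℕ, ((gB ζ B).coeff j) ^ (2 ^ 2) = (gB ζ B).coeff j) ∧
  IsCoprime (gB ζ B) (polyGal 2 1 (gB ζ B)) ∧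
  Disjoint B (Finset.image (fun k => 2 * k) B) ∧
  B ∪ Finset.image (fun k => 2 * k) B = Finset.univ \ {0}

/-- `B* = {1 ≤ j ≤ n−1 : Σ_{i ∈ B} ζ^(−ij) = λ}`. -/
noncomputable def blockStar {L : Type*} [Field L] [DecidableEq L] {n : ℕ} [NeZero n]
    (ζ lam : L) (B : Finset (ZMod n)) : Finset (ZMod n) :=
  Finset.univ.filter (fun j : ZMod n =>
    j ≠ 0 ∧ ∑ i ∈ B, (ζ ^ (ZMod.val (i * j)))⁻¹ = lam)

/-!
Let `S(j) = Σ_{i ∈ B} ψ(-ij)` for the primitive additive character `ψ(a) = ζ^a` of `ℤ/nℤ`.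
Orthogonality of `ψ` and `B ⊔ 2B = (ℤ/nℤ) ∖ {0}` give `S(j) + S(2j) = -1` for `j ≠ 0`, and
`S(2j) = S(j)²` in characteristic `2`, so `S(j)` is a root of `x² + x + 1`, i.e. `λ` or `λ²`.
Hence `B* ⊔ 2B* = (ℤ/nℤ) ∖ {0}` as well; then `4B* = B*` makes `g_{B*}` fixed by `σ²`, and
`g_{B*}^σ = g_{2B*}` is coprime to it. For `j ≠ 0` the indicator of `B*` is `S(j) + λ²`, so Fourier
inversion gives `S_{B*}(k) = [-k ∈ B] + |B| + λ²` for `k ≠ 0`, and the parity of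
`|B| = (n - 1) / 2` decides between `B** = -B` and `B** = -2B`.
-/

open Finset

section DoublingSplit

variable {R : Type*} [CommRing R] [Fintype R] [DecidableEq R]

def IsDoublingSplit (B : Finset R) : Prop :=
  Disjoint B (B.image (fun k => 2 * k)) ∧ B ∪ B.image (fun k => 2 * k) = univ \ {0}

lemma image_two_mul_univ_sdiff_zero (h2 : IsUnit (2 : R)) :
    (univ \ {0} : Finset R).image (fun k => 2 * k) = univ \ {0} := by
  rw [image_sdiff _ _ h2.mul_right_injective, image_singleton, mul_zero,
    image_univ_of_surjective (Finite.injective_iff_surjective.1 h2.mul_right_injective)]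

lemma isDoublingSplit_of_two_mul_mem_iff (h2 : IsUnit (2 : R)) {C : Finset R} (h0 : 0 ∉ C)
    (hC : ∀ k ≠ 0, 2 * k ∈ C ↔ k ∉ C) : IsDoublingSplit C := by
  have hne : ∀ k ∈ C, k ≠ 0 := fun k hk h => h0 (h ▸ hk)
  refine ⟨disjoint_left.2 ?_, ?_⟩
  · intro j hj hj2
    obtain ⟨k, hk, rfl⟩ := mem_image.1 hj2
    exact (hC k (hne k hk)).1 hj hk
  · ext j
    simp only [mem_union, mem_image, mem_sdiff, mem_univ, mem_singleton, true_and]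
    constructor
    · rintro (hj | ⟨k, hk, rfl⟩)
      · exact hne j hj
      · exact h2.mul_right_eq_zero.not.2 (hne k hk)
    · intro hj
      have h2k : 2 * (h2.unit⁻¹ * j) = j := by
        rw [← mul_assoc, h2.mul_val_inv, one_mul]
      by_cases hk : h2.unit⁻¹ * j ∈ C
      · exact Or.inr ⟨_, hk, h2k⟩
      · refine Or.inl (h2k ▸ (hC _ ?_).2 hk)
        rintro h
        exact hj (by rw [← h2k, h, mul_zero])

namespace IsDoublingSplit

variable {B : Finset R}

lemma ne_zero (hB : IsDoublingSplit B) {k : R} (hk : k ∈ B) : k ≠ 0 := by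
  have hk' := hB.2 ▸ mem_union_left _ hk
  simpa using hk'

lemma image_two_mul_eq (hB : IsDoublingSplit B) :
    B.image (fun k => 2 * k) = (univ \ {0}) \ B := by
  rw [← hB.2, union_sdiff_cancel_left hB.1]

lemma mem_image_two_mul_iff (hB : IsDoublingSplit B) {k : R} :
    k ∈ B.image (fun k => 2 * k) ↔ k ≠ 0 ∧ k ∉ B := by
  simp [hB.image_two_mul_eq]

lemma image_two_mul_image_two_mul (hB : IsDoublingSplit B) (h2 : IsUnit (2 : R)) :
    (B.image (fun k => 2 * k)).image (fun k => 2 * k) = B := by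
  rw [hB.image_two_mul_eq, image_sdiff _ _ h2.mul_right_injective,
    image_two_mul_univ_sdiff_zero h2, hB.image_two_mul_eq,
    Finset.sdiff_sdiff_eq_self fun k hk => by simpa using hB.ne_zero hk]

lemma two_mul_card_add_one (hB : IsDoublingSplit B) (h2 : IsUnit (2 : R)) :
    2 * #B + 1 = Fintype.card R := by
  have h := congrArg card hB.2
  rw [card_union_of_disjoint hB.1, card_image_of_injective _ h2.mul_right_injective,
    card_sdiff_of_subset (subset_univ _), card_univ, card_singleton] at h
  have := Fintype.card_pos (α := R)
  omega

end IsDoublingSplit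

end DoublingSplit

section CubeRoot

variable {K : Type*} [CommRing K] [IsDomain K] {lam x : K}

lemma sq_add_self_add_one_eq_zero_of_pow_four_eq_self (h4 : lam ^ 4 = lam)
    (h2 : lam ^ 2 ≠ lam) : lam ^ 2 + lam + 1 = 0 := by
  have h : lam * (lam - 1) * (lam ^ 2 + lam + 1) = 0 := by linear_combination h4
  rcases mul_eq_zero.1 h with h | h
  · rcases mul_eq_zero.1 h with h | h
    · exact absurd (by simp [h]) h2
    · exact absurd (by simp [sub_eq_zero.1 h]) h2
  · exact h

lemma eq_or_eq_sq_of_sq_add_self_add_one_eq_zero (hlam : lam ^ 2 + lam + 1 = 0)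
    (hx : x ^ 2 + x + 1 = 0) : x = lam ∨ x = lam ^ 2 := by
  have h : (x - lam) * (x - lam ^ 2) = 0 := by linear_combination hx + (lam - 1 - x) * hlam
  simpa only [mul_eq_zero, sub_eq_zero] using h

variable [CharP K 2]

lemma sq_ne_self_of_sq_add_self_add_one_eq_zero (hlam : lam ^ 2 + lam + 1 = 0) :
    lam ^ 2 ≠ lam := fun h =>
  one_ne_zero (by linear_combination hlam - h - lam * CharTwo.two_eq_zero (R := K))

end CubeRoot

section CharSum

variable {R : Type*} [CommRing R] {L : Type*} [Field L] (ψ : AddChar R L)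

def charSum (B : Finset R) (j : R) : L := ∑ i ∈ B, ψ (-(i * j))

variable {ψ} {B C : Finset R}

lemma charSum_zero : charSum ψ B 0 = #B := by
  simp [charSum]

lemma charSum_natCast_mul (p : ℕ) [Fact p.Prime] [CharP L p] (j : R) :
    charSum ψ B (p * j) = charSum ψ B j ^ p := by
  rw [charSum, charSum, sum_pow_char]
  refine sum_congr rfl fun i _ => ?_
  rw [← AddChar.map_nsmul_eq_pow, nsmul_eq_mul]
  ring_nf

lemma charSum_two_mul [CharP L 2] (j : R) : charSum ψ B (2 * j) = charSum ψ B j ^ 2 := by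
  simpa using charSum_natCast_mul (ψ := ψ) (B := B) 2 j

variable [DecidableEq R]

lemma charSum_union (h : Disjoint B C) (j : R) :
    charSum ψ (B ∪ C) j = charSum ψ B j + charSum ψ C j :=
  sum_union h

lemma charSum_image_mul {a : R} (ha : IsUnit a) (j : R) :
    charSum ψ (B.image (fun k => a * k)) j = charSum ψ B (a * j) := by
  rw [charSum, sum_image fun _ _ _ _ h => ha.mul_right_injective h]
  exact sum_congr rfl fun i _ => by ring_nf

variable [Fintype R]

lemma charSum_univ_sdiff_zero (hψ : ψ.IsPrimitive) {k : R} (hk : k ≠ 0) :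
    charSum ψ (univ \ {0}) k = -1 := by
  have h := AddChar.sum_mulShift (-k) hψ
  rw [if_neg (neg_ne_zero.2 hk), Nat.cast_zero] at h
  rw [charSum, sum_sdiff_eq_sub (subset_univ _), sum_singleton, zero_mul, neg_zero,
    AddChar.map_zero_eq_one]
  simp only [← mul_neg]
  rw [h, zero_sub]

lemma sum_charSum_mul (hψ : ψ.IsPrimitive) (B : Finset R) (k : R) :
    ∑ j, charSum ψ B j * ψ (-(j * k)) = if -k ∈ B then (Fintype.card R : L) else 0 := by
  have hinner (i : R) :
      ∑ j, ψ (-(i * j)) * ψ (-(j * k)) = if i = -k then (Fintype.card R : L) else 0 := by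
    simp only [← AddChar.map_add_eq_mul, show ∀ j, -(i * j) + -(j * k) = j * -(i + k) from
      fun j => by ring]
    simp only [AddChar.sum_mulShift _ hψ, neg_eq_zero, add_eq_zero_iff_eq_neg, Nat.cast_ite,
      Nat.cast_zero]
  simp only [charSum, sum_mul]
  rw [sum_comm]
  simp only [hinner, sum_ite_eq']

lemma IsDoublingSplit.charSum_add_charSum_two_mul (hB : IsDoublingSplit B) (hψ : ψ.IsPrimitive)
    (h2 : IsUnit (2 : R)) {j : R} (hj : j ≠ 0) :
    charSum ψ B j + charSum ψ B (2 * j) = -1 := by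
  rw [← charSum_image_mul h2, ← charSum_union hB.1, hB.2, charSum_univ_sdiff_zero hψ hj]

lemma IsDoublingSplit.charSum_eq_or_eq_sq [CharP L 2] {lam : L} (hB : IsDoublingSplit B)
    (hψ : ψ.IsPrimitive) (h2 : IsUnit (2 : R)) (hlam : lam ^ 2 + lam + 1 = 0) {j : R} (hj : j ≠ 0) :
    charSum ψ B j = lam ∨ charSum ψ B j = lam ^ 2 := by
  have h := hB.charSum_add_charSum_two_mul hψ h2 hj
  rw [charSum_two_mul] at h
  exact eq_or_eq_sq_of_sq_add_self_add_one_eq_zero hlam (by linear_combination h)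

end CharSum

section DualBlock

variable {R : Type*} [CommRing R] [Fintype R] [DecidableEq R] {L : Type*} [Field L]
  [DecidableEq L] {ψ : AddChar R L} {lam : L} {B : Finset R}

def dualBlock (ψ : AddChar R L) (lam : L) (B : Finset R) : Finset R :=
  univ.filter fun j => j ≠ 0 ∧ charSum ψ B j = lam

lemma mem_dualBlock {j : R} : j ∈ dualBlock ψ lam B ↔ j ≠ 0 ∧ charSum ψ B j = lam := by
  simp [dualBlock]

variable [CharP L 2]

lemma isDoublingSplit_dualBlock (hB : IsDoublingSplit B) (hψ : ψ.IsPrimitive)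
    (h2 : IsUnit (2 : R)) (hlam : lam ^ 2 + lam + 1 = 0) :
    IsDoublingSplit (dualBlock ψ lam B) := by
  have hlam2 := sq_ne_self_of_sq_add_self_add_one_eq_zero hlam
  have hlam4 : (lam ^ 2) ^ 2 = lam := by linear_combination (lam ^ 2 - lam) * hlam
  refine isDoublingSplit_of_two_mul_mem_iff h2 (by simp [mem_dualBlock]) fun k hk => ?_
  have h2k : 2 * k ≠ 0 := h2.mul_right_eq_zero.not.2 hk
  rw [mem_dualBlock, mem_dualBlock, charSum_two_mul]
  rcases hB.charSum_eq_or_eq_sq hψ h2 hlam hk with h | h <;> simp [h, hk, h2k, hlam2, hlam4]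

lemma IsDoublingSplit.charSum_dualBlock (hB : IsDoublingSplit B) (hψ : ψ.IsPrimitive)
    (h2 : IsUnit (2 : R)) (hlam : lam ^ 2 + lam + 1 = 0) {k : R} (hk : k ≠ 0) :
    charSum ψ (dualBlock ψ lam B) k
      = (if -k ∈ B then (Fintype.card R : L) else 0) + #B + lam ^ 2 := by
  have hind : ∀ j ∈ univ \ {0}, (if charSum ψ B j = lam then ψ (-(j * k)) else 0)
      = (charSum ψ B j + lam ^ 2) * ψ (-(j * k)) := by
    intro j hj
    rcases hB.charSum_eq_or_eq_sq hψ h2 hlam (by simpa using hj) with h | h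
    · rw [if_pos h, h, show lam + lam ^ 2 = 1 by
        linear_combination hlam - CharTwo.two_eq_zero (R := L), one_mul]
    · rw [if_neg (h ▸ sq_ne_self_of_sq_add_self_add_one_eq_zero hlam), h,
        CharTwo.add_self_eq_zero, zero_mul]
  have hfilter : dualBlock ψ lam B = (univ \ {0}).filter fun j => charSum ψ B j = lam := by
    ext j
    simp [mem_dualBlock]
  calc charSum ψ (dualBlock ψ lam B) k
      = ∑ j ∈ univ \ {0}, (charSum ψ B j + lam ^ 2) * ψ (-(j * k)) := by
        rw [← sum_congr rfl hind, ← sum_filter, hfilter, charSum]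
    _ = ∑ j ∈ univ \ {0}, charSum ψ B j * ψ (-(j * k))
          + lam ^ 2 * charSum ψ (univ \ {0}) k := by
        simp only [add_mul, sum_add_distrib, ← mul_sum]
        rfl
    _ = (if -k ∈ B then (Fintype.card R : L) else 0) + #B + lam ^ 2 := by
        rw [sum_sdiff_eq_sub (subset_univ _), sum_singleton, sum_charSum_mul hψ, charSum_zero,
          charSum_univ_sdiff_zero hψ hk, zero_mul, neg_zero, AddChar.map_zero_eq_one]
        linear_combination (-(#B : L) - lam ^ 2) * CharTwo.two_eq_zero (R := L)

lemma IsDoublingSplit.mem_dualBlock_dualBlock_iff (hB : IsDoublingSplit B) (hψ : ψ.IsPrimitive)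
    (h2 : IsUnit (2 : R)) (hlam : lam ^ 2 + lam + 1 = 0) (hR : Odd (Fintype.card R)) {k : R} :
    k ∈ dualBlock ψ lam (dualBlock ψ lam B) ↔ k ≠ 0 ∧ (-k ∈ B ↔ Even #B) := by
  have h20 : (2 : L) = 0 := CharTwo.two_eq_zero
  have hlam2 := sq_ne_self_of_sq_add_self_add_one_eq_zero hlam
  rw [mem_dualBlock]
  refine and_congr_right fun hk => ?_
  rw [hB.charSum_dualBlock hψ h2 hlam hk, natCast_eq_one_of_odd_of_two_eq_zero hR h20]
  rcases Nat.even_or_odd #B with hc | hc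
  · rw [natCast_eq_zero_of_even_of_two_eq_zero hc h20]
    by_cases h : -k ∈ B <;> simp only [h, hc, if_true, if_false, iff_true, iff_false]
    · linear_combination hlam - lam * h20
    · simpa using hlam2
  · rw [natCast_eq_one_of_odd_of_two_eq_zero hc h20]
    by_cases h : -k ∈ B <;> simp only [h, Nat.not_even_iff_odd.2 hc, if_true, if_false,
      not_true_eq_false, iff_true, iff_false]
    · exact fun h' => hlam2 (by linear_combination h' - h20)
    · linear_combination hlam - lam * h20

lemma IsDoublingSplit.dualBlock_dualBlock_of_even (hB : IsDoublingSplit B)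
    (hψ : ψ.IsPrimitive) (h2 : IsUnit (2 : R)) (hlam : lam ^ 2 + lam + 1 = 0)
    (hR : Odd (Fintype.card R)) (hc : Even #B) :
    dualBlock ψ lam (dualBlock ψ lam B) = B.image (fun k => -k) := by
  ext k
  rw [hB.mem_dualBlock_dualBlock_iff hψ h2 hlam hR, mem_image]
  constructor
  · rintro ⟨-, hkB⟩
    exact ⟨-k, hkB.2 hc, neg_neg k⟩
  · rintro ⟨b, hb, rfl⟩
    exact ⟨neg_ne_zero.2 (hB.ne_zero hb), by simpa [hc] using hb⟩

lemma IsDoublingSplit.dualBlock_dualBlock_of_odd (hB : IsDoublingSplit B)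
    (hψ : ψ.IsPrimitive) (h2 : IsUnit (2 : R)) (hlam : lam ^ 2 + lam + 1 = 0)
    (hR : Odd (Fintype.card R)) (hc : Odd #B) :
    dualBlock ψ lam (dualBlock ψ lam B) = B.image (fun k => -(2 * k)) := by
  ext k
  rw [hB.mem_dualBlock_dualBlock_iff hψ h2 hlam hR, ← neg_ne_zero, iff_false_intro
    (Nat.not_even_iff_odd.2 hc), iff_false, ← hB.mem_image_two_mul_iff, mem_image, mem_image]
  exact exists_congr fun b => and_congr_right fun _ => neg_eq_iff_eq_neg.symm

end DualBlock

lemma ZMod.isUnit_two_of_odd {n : ℕ} (hodd : Odd n) : IsUnit (2 : ZMod n) := by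
  simpa using (ZMod.isUnit_iff_coprime 2 n).2 hodd.coprime_two_left

section Cyclotomic

variable {n : ℕ} [NeZero n] {L : Type*} [Field L] {ζ : L}

lemma blockStar_eq_dualBlock [DecidableEq L] (hζ : ζ ^ n = 1) (lam : L) (B : Finset (ZMod n)) :
    blockStar ζ lam B = dualBlock (AddChar.zmodChar n hζ) lam B := by
  ext j
  simp [blockStar, mem_dualBlock, charSum, AddChar.map_neg_eq_inv, AddChar.zmodChar_apply]

lemma isCoprime_gB (hζ : IsPrimitiveRoot ζ n) {S T : Finset (ZMod n)} (h : Disjoint S T) :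
    IsCoprime (gB ζ S) (gB ζ T) := by
  refine IsCoprime.prod_left fun a ha => IsCoprime.prod_right fun b hb => ?_
  refine isCoprime_X_sub_C_of_isUnit_sub (IsUnit.mk0 _ (sub_ne_zero.2 fun hab => ?_))
  exact disjoint_left.1 h ha (ZMod.val_injective n (hζ.pow_inj a.val_lt b.val_lt hab) ▸ hb)

variable [CharP L 2]

lemma polyGal_two_one_eq_map (g : L[X]) : polyGal 2 1 g = g.map (frobenius L 2) := by
  conv_rhs => rw [g.as_sum_support]
  rw [Polynomial.map_sum]
  refine sum_congr rfl fun j _ => ?_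
  rw [map_monomial, frobenius_def, ← C_mul_X_pow_eq_monomial]
  norm_num

lemma map_frobenius_gB (hζ : ζ ^ n = 1) (h2 : IsUnit (2 : ZMod n)) (S : Finset (ZMod n)) :
    (gB ζ S).map (frobenius L 2) = gB ζ (S.image (fun k => 2 * k)) := by
  rw [gB, gB, Polynomial.map_prod, prod_image fun _ _ _ _ h => h2.mul_right_injective h]
  refine prod_congr rfl fun k _ => ?_
  have h := AddChar.map_nsmul_eq_pow (AddChar.zmodChar n hζ) 2 k
  rw [nsmul_eq_mul, Nat.cast_ofNat] at h
  rw [Polynomial.map_sub, map_X, map_C, frobenius_def]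
  exact congrArg (X - C ·) h.symm

lemma isComplete2Block_of_isDoublingSplit (hζ : IsPrimitiveRoot ζ n) (hodd : Odd n)
    {S : Finset (ZMod n)} (hS : IsDoublingSplit S) : IsComplete2Block ζ S := by
  have h2 := ZMod.isUnit_two_of_odd hodd
  have hσσ : ((gB ζ S).map (frobenius L 2)).map (frobenius L 2) = gB ζ S := by
    rw [map_frobenius_gB hζ.pow_eq_one h2, map_frobenius_gB hζ.pow_eq_one h2,
      hS.image_two_mul_image_two_mul h2]
  refine ⟨fun j => ?_, ?_, hS⟩
  · simpa [coeff_map, frobenius_def, ← pow_mul] using congrArg (coeff · j) hσσ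
  · rw [polyGal_two_one_eq_map, map_frobenius_gB hζ.pow_eq_one h2]
    exact isCoprime_gB hζ hS.1

end Cyclotomic

theorem stmt15_general (n : ℕ) [NeZero n] (hodd : Odd n)
    (L : Type*) [Field L] [DecidableEq L] [CharP L 2]
    (ζ : L) (hζ : IsPrimitiveRoot ζ n)
    (lam : L) (hlam4 : lam ^ 4 = lam) (hlam2 : lam ^ 2 ≠ lam)
    (B : Finset (ZMod n)) (hB : IsComplete2Block ζ B) :
    IsComplete2Block ζ (blockStar ζ lam B) ∧
      (n % 4 = 1 →
        blockStar ζ lam (blockStar ζ lam B) = Finset.image (fun k => -k) B) ∧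
      (n % 4 = 3 →
        blockStar ζ lam (blockStar ζ lam B) = Finset.image (fun k => -(2 * k)) B) := by
  have hψ := AddChar.zmodChar_primitive_of_primitive_root n hζ
  have h2 := ZMod.isUnit_two_of_odd hodd
  have hlam := sq_add_self_add_one_eq_zero_of_pow_four_eq_self hlam4 hlam2
  have hR : Odd (Fintype.card (ZMod n)) := by rwa [ZMod.card]
  have hsplit : IsDoublingSplit B := hB.2.2
  have hcard := hsplit.two_mul_card_add_one h2
  rw [ZMod.card] at hcard
  simp only [blockStar_eq_dualBlock hζ.pow_eq_one]
  refine ⟨isComplete2Block_of_isDoublingSplit hζ hodd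
    (isDoublingSplit_dualBlock hsplit hψ h2 hlam), fun hn => ?_, fun hn => ?_⟩
  · exact hsplit.dualBlock_dualBlock_of_even hψ h2 hlam hR (by rw [Nat.even_iff]; omega)
  · exact hsplit.dualBlock_dualBlock_of_odd hψ h2 hlam hR (by rw [Nat.odd_iff]; omega)

/-- for `n` odd, `λ ∈ F_4 ∖ F_2`, `ζ` a primitive `n`-th root of unity over
`F_4` and `B` a complete `2²`-block, the set `B*` is again a complete `2²`-block, and
`B** = −B` if `n ≡ 1 (mod 4)` while `B** = −2B` if `n ≡ 3 (mod 4)`. -/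
theorem stmt15 (n : ℕ) [NeZero n] (hodd : Odd n)
    (L : Type*) [Field L] [Fintype L] [DecidableEq L] [CharP L 2]
    (ζ : L) (hζ : IsPrimitiveRoot ζ n)
    (lam : L) (hlam4 : lam ^ 4 = lam) (hlam2 : lam ^ 2 ≠ lam)
    (B : Finset (ZMod n)) (hB : IsComplete2Block ζ B) :
    IsComplete2Block ζ (blockStar ζ lam B) ∧
      (n % 4 = 1 →
        blockStar ζ lam (blockStar ζ lam B) = Finset.image (fun k => -k) B) ∧
      (n % 4 = 3 →
        blockStar ζ lam (blockStar ζ lam B) = Finset.image (fun k => -(2 * k)) B) :=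
  stmt15_general n hodd L ζ hζ lam hlam4 hlam2 B hB
end
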